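/- Let X, Y be strings of length n with ED(X,Y) ≤ β for some integer β ≥ 1. Fix a level p ≥ 1 and partition X into blocks X_{p,i} of length 2^p. Suppose Y = Y'_{p,0}·Y'_{p,1}·⋯·Y'_{p,m_p−1} is a partition achieving ED(X,Y) = Σ_i ED(X_{p,i}, Y'_{p,i}). Then for every i, the β-shifted edit distance between X_{p,i} and the block Y_{p,i} = Y[i·2^p .. min(n,(i+1)·2^p)) satisfies ED_β(X_{p,i}, Y_{p,i}) ≤ 2·ED(X_{p,i}, Y'_{p,i}). -/

import Mathlib

/-- Restored from older Mathlib (`Mathlib/Data/List/EditDistance/Defs.lean`), removed since. -/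
structure Levenshtein.Cost (α β δ : Type*) where
  delete : α → δ
  insert : β → δ
  substitute : α → β → δ

/-- Restored from older Mathlib: unit costs. -/
def Levenshtein.defaultCost {α : Type*} [DecidableEq α] : Levenshtein.Cost α α ℕ where
  delete _ := 1
  insert _ := 1
  substitute a b := if a = b then 0 else 1

/-- Restored from older Mathlib. -/
def Levenshtein.impl {α β δ : Type*} [AddZeroClass δ] [Min δ] (C : Levenshtein.Cost α β δ)
    (xs : List α) (y : β) (d : {r : List δ // 0 < r.length}) : {r : List δ // 0 < r.length} :=
  let ⟨ds, w⟩ := d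
  xs.zip (ds.zip ds.tail) |>.foldr
    (init := ⟨[C.insert y + ds.getLast (List.length_pos_iff_ne_nil.mp w)], by simp⟩)
    (fun ⟨x, d₀, d₁⟩ ⟨r, w⟩ =>
      ⟨min (C.delete x + r[0]) (min (C.insert y + d₀) (C.substitute x y + d₁)) :: r, by simp⟩)

/-- Restored from older Mathlib. -/
def suffixLevenshtein {α β δ : Type*} [AddZeroClass δ] [Min δ] (C : Levenshtein.Cost α β δ)
    (xs : List α) (ys : List β) : {r : List δ // 0 < r.length} :=
  ys.foldr
    (Levenshtein.impl C xs)
    (xs.foldr (init := ⟨[0], by simp⟩) (fun a ⟨ds, w⟩ => ⟨(C.delete a + ds[0]'w) :: ds, by simp⟩))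

/-- Restored from older Mathlib: the Levenshtein distance. -/
def levenshtein {α β δ : Type*} [AddZeroClass δ] [Min δ] (C : Levenshtein.Cost α β δ)
    (xs : List α) (ys : List β) : δ :=
  let ⟨r, w⟩ := suffixLevenshtein C xs ys
  r[0]

/-- The edit distance between two lists (Levenshtein distance with unit costs). -/
def ED {α : Type*} [DecidableEq α] (X Y : List α) : ℕ :=
  levenshtein Levenshtein.defaultCost X Y

/-- The β-shifted edit distance: the minimum over shifts Δ ∈ [0, min(|U|,|V|,β)] of
the edit distance after removing Δ characters from one end of each string. -/
def EDs {α : Type*} [DecidableEq α] (β : ℕ) (U V : List α) : ℕ :=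
  (Finset.range (min (min U.length V.length) β + 1)).inf' Finset.nonempty_range_add_one
    fun Δ => min (ED (U.drop Δ) (V.take (V.length - Δ)))
                 (ED (U.take (U.length - Δ)) (V.drop Δ))

/-- The i-th block of length 2^p of a string: X[i·2^p .. min(n,(i+1)·2^p)). -/
def blk {α : Type*} (X : List α) (p i : ℕ) : List α := (X.drop (i * 2 ^ p)).take (2 ^ p)

/-- The number of blocks at level p: m_p = ⌈n / 2^p⌉. -/
def nblocks (n p : ℕ) : ℕ := (n + 2 ^ p - 1) / 2 ^ p

/-! Each piece `Y'_{p,k}` has length within `ED(X_{p,k}, Y'_{p,k})` of `|X_{p,k}|`, so the cut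
points drift from the block boundaries by at most the cost already paid:
`|c_i - i·2^p| ≤ ED(X,Y) ≤ β`. The shift `Δ = |c_i - i·2^p|` therefore makes `Y_{p,i}` start
where `Y'_{p,i}` starts. Cutting `Δ` characters off the same end of `X_{p,i}` and `Y'_{p,i}`
costs nothing, and what is left of `Y'_{p,i}` differs from the shifted `Y_{p,i}` only at its
end, by at most `||Y'_{p,i}| - |X_{p,i}|| ≤ ED(X_{p,i}, Y'_{p,i})` characters. -/

section Levenshtein

variable {α β δ : Type*} [AddZeroClass δ] [Min δ] (C : Levenshtein.Cost α β δ)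

theorem Levenshtein.impl_nil_val (y : β) (s : {r : List δ // 0 < r.length}) :
    (Levenshtein.impl C [] y s).1 = [C.insert y + s.1.getLast (List.ne_nil_of_length_pos s.2)] := by
  obtain ⟨ds, w⟩ := s
  rfl

theorem Levenshtein.impl_cons_val (x : α) (xs : List α) (y : β) {d : δ}
    {s t : {r : List δ // 0 < r.length}} (h : s.1 = d :: t.1) :
    (Levenshtein.impl C (x :: xs) y s).1 =
      min (C.delete x + (Levenshtein.impl C xs y t).1[0]'(Levenshtein.impl C xs y t).2)
        (min (C.insert y + d) (C.substitute x y + t.1[0]'t.2)) ::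
        (Levenshtein.impl C xs y t).1 := by
  obtain ⟨s, hs⟩ := s
  obtain ⟨t, ht⟩ := t
  subst h
  match t, ht with | _ :: _, _ => rfl

theorem levenshtein_eq_getElem_zero (xs : List α) (ys : List β) :
    levenshtein C xs ys = (suffixLevenshtein C xs ys).1[0]'(suffixLevenshtein C xs ys).2 := rfl

theorem suffixLevenshtein_cons_right (xs : List α) (y : β) (ys : List β) :
    suffixLevenshtein C xs (y :: ys) = Levenshtein.impl C xs y (suffixLevenshtein C xs ys) := rfl

theorem suffixLevenshtein_nil_left_length (ys : List β) :
    (suffixLevenshtein C ([] : List α) ys).1.length = 1 := by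
  cases ys with
  | nil => rfl
  | cons y ys => exact congrArg List.length (Levenshtein.impl_nil_val C y _)

theorem suffixLevenshtein_cons_left_val (x : α) (xs : List α) (ys : List β) :
    (suffixLevenshtein C (x :: xs) ys).1 =
      levenshtein C (x :: xs) ys :: (suffixLevenshtein C xs ys).1 := by
  induction ys with
  | nil => rfl
  | cons y ys ih =>
    simp only [levenshtein_eq_getElem_zero C (x :: xs) (y :: ys), suffixLevenshtein_cons_right,
      Levenshtein.impl_cons_val C x xs y ih, List.getElem_cons_zero]

theorem levenshtein_nil_cons (y : β) (ys : List β) :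
    levenshtein C ([] : List α) (y :: ys) = C.insert y + levenshtein C [] ys := by
  have h := Levenshtein.impl_nil_val C y (suffixLevenshtein C ([] : List α) ys)
  simp only [List.getLast_eq_getElem, suffixLevenshtein_nil_left_length] at h
  exact List.head_eq_of_cons_eq h

theorem levenshtein_cons_nil (x : α) (xs : List α) :
    levenshtein C (x :: xs) ([] : List β) = C.delete x + levenshtein C xs [] := rfl

theorem levenshtein_cons_cons (x : α) (xs : List α) (y : β) (ys : List β) :
    levenshtein C (x :: xs) (y :: ys) =
      min (C.delete x + levenshtein C xs (y :: ys))
        (min (C.insert y + levenshtein C (x :: xs) ys)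
          (C.substitute x y + levenshtein C xs ys)) := by
  simp only [levenshtein_eq_getElem_zero C (x :: xs) (y :: ys), suffixLevenshtein_cons_right,
    Levenshtein.impl_cons_val C x xs y (suffixLevenshtein_cons_left_val C x xs ys),
    List.getElem_cons_zero]
  rfl

end Levenshtein

section EditDistance

variable {α : Type*} [DecidableEq α]

theorem ED_nil_left (ys : List α) : ED [] ys = ys.length := by
  induction ys with
  | nil => rfl
  | cons y ys ih =>
    rw [ED, levenshtein_nil_cons, ← ED, ih, List.length_cons, add_comm]
    rfl

theorem ED_nil_right (xs : List α) : ED xs [] = xs.length := by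
  induction xs with
  | nil => rfl
  | cons x xs ih =>
    rw [ED, levenshtein_cons_nil, ← ED, ih, List.length_cons, add_comm]
    rfl

theorem ED_cons_cons (x : α) (xs : List α) (y : α) (ys : List α) :
    ED (x :: xs) (y :: ys) =
      min (ED xs (y :: ys) + 1)
        (min (ED (x :: xs) ys + 1) (ED xs ys + if x = y then 0 else 1)) := by
  simp only [ED, levenshtein_cons_cons, Levenshtein.defaultCost, add_comm]

theorem ED_comm (xs ys : List α) : ED xs ys = ED ys xs := by
  induction xs generalizing ys with
  | nil => rw [ED_nil_left, ED_nil_right]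
  | cons x xs ih =>
    induction ys with
    | nil => rw [ED_nil_left, ED_nil_right]
    | cons y ys ihy =>
      rw [ED_cons_cons, ED_cons_cons, ih, ih, ihy]
      simp only [@eq_comm _ y x]
      exact min_left_comm _ _ _

theorem ED_cons_left_le (x : α) (xs ys : List α) : ED (x :: xs) ys ≤ ED xs ys + 1 := by
  cases ys with
  | nil => simp [ED_nil_right]
  | cons y ys => rw [ED_cons_cons]; omega

theorem ED_le_ED_cons_right (xs : List α) (y : α) (ys : List α) :
    ED xs ys ≤ ED xs (y :: ys) + 1 := by
  induction xs generalizing ys with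
  | nil => simp only [ED_nil_left, List.length_cons]; omega
  | cons x xs ih =>
    have h1 := ih ys
    have h2 := ED_cons_left_le x xs ys
    rw [ED_cons_cons]
    split_ifs <;> omega

theorem ED_le_ED_cons_left (x : α) (xs ys : List α) : ED xs ys ≤ ED (x :: xs) ys + 1 := by
  rw [ED_comm, ED_comm (x :: xs)]
  exact ED_le_ED_cons_right ys x xs

theorem ED_le_ED_cons_cons (x : α) (xs : List α) (y : α) (ys : List α) :
    ED xs ys ≤ ED (x :: xs) (y :: ys) := by
  have h1 := ED_le_ED_cons_right xs y ys
  have h2 := ED_le_ED_cons_left x xs ys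
  rw [ED_cons_cons]
  split_ifs <;> omega

theorem ED_le_length_add_length (xs ys : List α) : ED xs ys ≤ xs.length + ys.length := by
  induction xs with
  | nil => simp [ED_nil_left]
  | cons x xs ih => have := ED_cons_left_le x xs ys; simp only [List.length_cons]; omega

theorem length_le_ED_add_length (xs ys : List α) : xs.length ≤ ED xs ys + ys.length := by
  induction ys with
  | nil => simp [ED_nil_right]
  | cons y ys ih => have := ED_le_ED_cons_right xs y ys; simp only [List.length_cons]; omega

theorem dist_length_le_ED (xs ys : List α) : Nat.dist xs.length ys.length ≤ ED xs ys := by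
  have h1 := length_le_ED_add_length xs ys
  have h2 := length_le_ED_add_length ys xs
  rw [ED_comm] at h2
  unfold Nat.dist
  omega

theorem ED_drop_drop_le (xs ys : List α) (j : ℕ) : ED (xs.drop j) (ys.drop j) ≤ ED xs ys := by
  induction j generalizing xs ys with
  | zero => rfl
  | succ j ih =>
    cases xs with
    | nil => simp only [List.drop_nil, ED_nil_left, List.length_drop]; omega
    | cons x xs =>
      cases ys with
      | nil => simp only [List.drop_nil, ED_nil_right, List.length_drop]; omega
      | cons y ys => exact (ih xs ys).trans (ED_le_ED_cons_cons x xs y ys)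

theorem ED_le_ED_append_append (xs ys xs' ys' : List α) :
    ED xs ys ≤ ED (xs ++ xs') (ys ++ ys') + Nat.dist xs'.length ys'.length := by
  unfold Nat.dist
  induction xs generalizing ys with
  | nil =>
    have := length_le_ED_add_length (ys ++ ys') xs'
    rw [ED_comm, List.length_append] at this
    simp only [ED_nil_left, List.nil_append]
    omega
  | cons x xs ih =>
    induction ys with
    | nil =>
      have := length_le_ED_add_length (x :: xs ++ xs') ys'
      simp only [ED_nil_right, List.nil_append, List.length_append, List.length_cons] at this ⊢
      omega
    | cons y ys ihy =>
      have h1 := ih (y :: ys)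
      have h2 := ih ys
      simp only [List.cons_append, ED_cons_cons] at ihy h1 h2 ⊢
      split_ifs <;> omega

theorem ED_append_right_le (xs ys zs : List α) : ED xs (ys ++ zs) ≤ ED xs ys + zs.length := by
  induction xs generalizing ys with
  | nil => simp [ED_nil_left]
  | cons x xs ih =>
    induction ys with
    | nil =>
      have := ED_le_length_add_length (x :: xs) zs
      simpa [ED_nil_right] using this
    | cons y ys ihy =>
      have h1 := ih (y :: ys)
      have h2 := ih ys
      simp only [List.cons_append, ED_cons_cons] at ihy h1 h2 ⊢
      split_ifs <;> omega

theorem ED_take_take_le (xs ys : List α) (j k : ℕ) :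
    ED (xs.take j) (ys.take k) ≤ ED xs ys + Nat.dist (xs.length - j) (ys.length - k) := by
  have := ED_le_ED_append_append (xs.take j) (ys.take k) (xs.drop j) (ys.drop k)
  simpa only [List.take_append_drop, List.length_drop] using this

theorem ED_take_le_ED_take (xs ys : List α) (k l : ℕ) :
    ED xs (ys.take k) ≤ ED xs (ys.take l) + Nat.dist k l := by
  rcases le_total k l with h | h
  · have := ED_take_take_le xs (ys.take l) xs.length k
    rw [List.take_take, min_eq_left h, List.take_length] at this
    simp only [List.length_take, Nat.sub_self] at this
    unfold Nat.dist at *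
    omega
  · have := ED_append_right_le xs (ys.take l) ((ys.drop l).take (k - l))
    rw [← List.take_add, Nat.add_sub_cancel' h] at this
    have := List.length_take_le (k - l) (ys.drop l)
    unfold Nat.dist
    omega

end EditDistance

theorem length_take_drop_of_add_le {α : Type*} {W : List α} {s m : ℕ} (h : s + m ≤ W.length) :
    ((W.drop s).take m).length = m := by
  simp only [List.length_take, List.length_drop]
  omega

section ShiftedEditDistance

variable {α : Type*} [DecidableEq α]

theorem EDs_le_ED_drop_take {β Δ : ℕ} {U V : List α} (hU : Δ ≤ U.length) (hV : Δ ≤ V.length)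
    (hβ : Δ ≤ β) : EDs β U V ≤ ED (U.drop Δ) (V.take (V.length - Δ)) :=
  (Finset.inf'_le _ (Finset.mem_range.mpr (by omega))).trans (min_le_left _ _)

theorem EDs_le_ED_take_drop {β Δ : ℕ} {U V : List α} (hU : Δ ≤ U.length) (hV : Δ ≤ V.length)
    (hβ : Δ ≤ β) : EDs β U V ≤ ED (U.take (U.length - Δ)) (V.drop Δ) :=
  (Finset.inf'_le _ (Finset.mem_range.mpr (by omega))).trans (min_le_right _ _)

theorem EDs_eq_zero_of_length_le {β : ℕ} {U V : List α} (hUV : U.length = V.length)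
    (hβ : U.length ≤ β) : EDs β U V = 0 := by
  have := EDs_le_ED_drop_take le_rfl hUV.le hβ
  rwa [List.drop_length, hUV, Nat.sub_self, List.take_zero, ED_nil_left, List.length_nil,
    Nat.le_zero] at this

variable (β : ℕ) (A W : List α) {a k s : ℕ}

theorem EDs_window_le_two_mul_ED_of_le (hk : a + k ≤ W.length) (hs : s + A.length ≤ W.length)
    (has : a ≤ s) (hsa : s ≤ a + β) :
    EDs β A ((W.drop s).take A.length) ≤ 2 * ED A ((W.drop a).take k) := by
  have hd := dist_length_le_ED A ((W.drop a).take k)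
  have hP := length_take_drop_of_add_le hk
  have hV := length_take_drop_of_add_le hs
  rw [hP] at hd
  rcases lt_or_ge A.length (s - a) with hΔ | hΔ
  · exact (EDs_eq_zero_of_length_le (β := β) hV.symm (by omega)).trans_le (Nat.zero_le _)
  calc EDs β A ((W.drop s).take A.length)
      ≤ ED (A.drop (s - a)) (((W.drop s).take A.length).take (A.length - (s - a))) := by
        have := EDs_le_ED_drop_take (β := β) hΔ (hV.symm ▸ hΔ) (by omega)
        rwa [hV] at this
    _ = ED (A.drop (s - a)) ((W.drop s).take (A.length - (s - a))) := by
        rw [List.take_take, min_eq_left (by omega)]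
    _ ≤ ED (A.drop (s - a)) ((W.drop s).take (k - (s - a))) +
          Nat.dist (A.length - (s - a)) (k - (s - a)) :=
        ED_take_le_ED_take _ _ _ _
    _ = ED (A.drop (s - a)) (((W.drop a).take k).drop (s - a)) +
          Nat.dist (A.length - (s - a)) (k - (s - a)) := by
        rw [List.drop_take, List.drop_drop, Nat.add_sub_cancel' has]
    _ ≤ ED A ((W.drop a).take k) + Nat.dist (A.length - (s - a)) (k - (s - a)) :=
        Nat.add_le_add_right (ED_drop_drop_le _ _ _) _
    _ ≤ 2 * ED A ((W.drop a).take k) := by unfold Nat.dist at *; omega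

theorem EDs_window_le_two_mul_ED_of_ge (hk : a + k ≤ W.length) (hs : s + A.length ≤ W.length)
    (hsa : s ≤ a) (has : a ≤ s + β) :
    EDs β A ((W.drop s).take A.length) ≤ 2 * ED A ((W.drop a).take k) := by
  have hd := dist_length_le_ED A ((W.drop a).take k)
  have hP := length_take_drop_of_add_le hk
  have hV := length_take_drop_of_add_le hs
  rw [hP] at hd
  rcases lt_or_ge A.length (a - s) with hΔ | hΔ
  · exact (EDs_eq_zero_of_length_le (β := β) hV.symm (by omega)).trans_le (Nat.zero_le _)
  have hcut := ED_take_take_le A ((W.drop a).take k) (A.length - (a - s)) (k - (a - s))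
  rw [hP, List.take_take, min_eq_left (Nat.sub_le k _)] at hcut
  calc EDs β A ((W.drop s).take A.length)
      ≤ ED (A.take (A.length - (a - s))) (((W.drop s).take A.length).drop (a - s)) :=
        EDs_le_ED_take_drop hΔ (hV.symm ▸ hΔ) (by omega)
    _ = ED (A.take (A.length - (a - s))) ((W.drop a).take (A.length - (a - s))) := by
        rw [List.drop_take, List.drop_drop, Nat.add_sub_cancel' hsa]
    _ ≤ ED (A.take (A.length - (a - s))) ((W.drop a).take (k - (a - s))) +
          Nat.dist (A.length - (a - s)) (k - (a - s)) :=
        ED_take_le_ED_take _ _ _ _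
    _ ≤ 2 * ED A ((W.drop a).take k) := by unfold Nat.dist at *; omega

theorem EDs_window_le_two_mul_ED (hk : a + k ≤ W.length) (hs : s + A.length ≤ W.length)
    (hβ : Nat.dist s a ≤ β) :
    EDs β A ((W.drop s).take A.length) ≤ 2 * ED A ((W.drop a).take k) := by
  unfold Nat.dist at hβ
  rcases le_total a s with h | h
  · exact EDs_window_le_two_mul_ED_of_le β A W hk hs h (by omega)
  · exact EDs_window_le_two_mul_ED_of_ge β A W hk hs h (by omega)

end ShiftedEditDistance

theorem dist_cut_le_sum_ED {α : Type*} [DecidableEq α] (X Y : List α) (w : ℕ) {c : ℕ → ℕ}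
    (hc : Monotone c) (hc0 : c 0 = 0) {j : ℕ} (hX : j * w ≤ X.length) (hY : c j ≤ Y.length) :
    Nat.dist (j * w) (c j) ≤
      ∑ k ∈ Finset.range j,
        ED ((X.drop (k * w)).take w) ((Y.drop (c k)).take (c (k + 1) - c k)) := by
  induction j with
  | zero => simp [hc0, Nat.dist]
  | succ j ih =>
    rw [add_one_mul] at hX
    have hcj : c j ≤ c (j + 1) := hc j.le_succ
    have ih := ih (by omega) (hcj.trans hY)
    have hd := dist_length_le_ED ((X.drop (j * w)).take w)
      ((Y.drop (c j)).take (c (j + 1) - c j))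
    simp only [List.length_take, List.length_drop] at hd
    rw [Finset.sum_range_succ, add_one_mul]
    unfold Nat.dist at *
    omega

theorem mul_lt_of_lt_nblocks {n p i : ℕ} (hi : i < nblocks n p) : i * 2 ^ p < n := by
  have : (i + 1) * 2 ^ p ≤ n + 2 ^ p - 1 := (Nat.le_div_iff_mul_le (Nat.two_pow_pos p)).mp hi
  rw [add_one_mul] at this
  have := Nat.two_pow_pos p
  omega

theorem stmt_5_general {α : Type*} [DecidableEq α] (n β p : ℕ) (X Y : List α)
    (hX : X.length = n) (hY : Y.length = n) (hED : ED X Y ≤ β)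
    (c : ℕ → ℕ) (hc0 : c 0 = 0) (hcn : c (nblocks n p) = n) (hmono : Monotone c)
    (hopt : ED X Y = ∑ i ∈ Finset.range (nblocks n p),
      ED (blk X p i) ((Y.drop (c i)).take (c (i + 1) - c i))) :
    ∀ i < nblocks n p,
      EDs β (blk X p i) (blk Y p i) ≤
        2 * ED (blk X p i) ((Y.drop (c i)).take (c (i + 1) - c i)) := by
  intro i hi
  have hs := mul_lt_of_lt_nblocks hi
  have hci : c i ≤ c (i + 1) := hmono i.le_succ
  have hcn' : c (i + 1) ≤ n := hcn ▸ hmono hi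
  have hlen : (blk X p i).length = min (2 ^ p) (n - i * 2 ^ p) := by
    simp only [blk, List.length_take, List.length_drop, hX]
  have hdrift : Nat.dist (i * 2 ^ p) (c i) ≤ β :=
    calc Nat.dist (i * 2 ^ p) (c i)
        ≤ ∑ k ∈ Finset.range i, ED (blk X p k) ((Y.drop (c k)).take (c (k + 1) - c k)) :=
          dist_cut_le_sum_ED X Y (2 ^ p) hmono hc0 (by omega) (by omega)
      _ ≤ ED X Y := hopt ▸ Finset.sum_le_sum_of_subset (Finset.range_subset_range.mpr hi.le)
      _ ≤ β := hED
  have hwindow : blk Y p i = (Y.drop (i * 2 ^ p)).take (blk X p i).length := by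
    rw [blk, List.take_eq_take_iff, hlen, List.length_drop, hY]
    omega
  rw [hwindow]
  exact EDs_window_le_two_mul_ED β _ Y (by omega) (by omega) hdrift

/-- If Y is partitioned into pieces Y'_{p,i} (given by monotone cut points c with
c 0 = 0 and c m_p = n) achieving ED(X,Y) = Σ_i ED(X_{p,i}, Y'_{p,i}) ≤ β, then for
every i, ED_β(X_{p,i}, Y_{p,i}) ≤ 2·ED(X_{p,i}, Y'_{p,i}). -/
theorem stmt_5 {α : Type*} [DecidableEq α] (n β p : ℕ) (X Y : List α)
    (hX : X.length = n) (hY : Y.length = n) (hβ : 1 ≤ β) (hED : ED X Y ≤ β)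
    (hp : 1 ≤ p) (c : ℕ → ℕ) (hc0 : c 0 = 0) (hcn : c (nblocks n p) = n) (hmono : Monotone c)
    (hopt : ED X Y = ∑ i ∈ Finset.range (nblocks n p),
      ED (blk X p i) ((Y.drop (c i)).take (c (i + 1) - c i))) :
    ∀ i < nblocks n p,
      EDs β (blk X p i) (blk Y p i) ≤
        2 * ED (blk X p i) ((Y.drop (c i)).take (c (i + 1) - c i)) :=
  stmt_5_general n β p X Y hX hY hED c hc0 hcn hmono hopt
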